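/- arXiv:1607.04778 — 3 statements merged into one kernel-verified Lean document; each statement's English description precedes it below -/
import Mathlib

section
/- In the symmetric group S₅ there exist elements a and b such that a has order 2, b has order 4, the product a·b has order 5, and a and b generate S₅. -/
open Equiv Equiv.Perm

private def aa : Equiv.Perm (Fin 5) := Equiv.swap 3 4
private def bb : Equiv.Perm (Fin 5) :=
  Equiv.swap 0 1 * Equiv.swap 1 2 * Equiv.swap 2 3

theorem S5_skg_245 : ∃ a b : Equiv.Perm (Fin 5),
    orderOf a = 2 ∧ orderOf b = 4 ∧ orderOf (a * b) = 5 ∧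
    Subgroup.closure {a, b} = (⊤ : Subgroup (Equiv.Perm (Fin 5))) := by
  haveI : Fact (Nat.Prime 2) := ⟨by norm_num⟩
  haveI : Fact (Nat.Prime 5) := ⟨by norm_num⟩
  refine ⟨aa, bb, ?_, ?_, ?_, ?_⟩
  · exact orderOf_eq_prime (by decide) (by decide)
  · rw [orderOf_eq_iff (by norm_num)]
    exact ⟨by decide, by decide⟩
  · exact orderOf_eq_prime (by decide) (by decide)
  case _ =>
    have h5 : orderOf (aa * bb) = 5 := orderOf_eq_prime (by decide) (by decide)
    have h1 : (aa * bb).IsCycle :=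
      Equiv.Perm.isCycle_of_prime_order' (by rw [h5]; norm_num) (by rw [h5]; simp)
    have h2 : (aa * bb).support = Finset.univ := by decide
    have key := Equiv.Perm.closure_cycle_adjacent_swap h1 h2 (4 : Fin 5)
    have hswap : Equiv.swap (4 : Fin 5) ((aa * bb) 4) = aa := by decide
    rw [eq_top_iff, ← key, Subgroup.closure_le, Set.insert_subset_iff]
    constructor
    · exact Subgroup.mul_mem _ (Subgroup.subset_closure (by simp))
        (Subgroup.subset_closure (by simp))
    · rw [Set.singleton_subset_iff, hswap]
      exact Subgroup.subset_closure (by simp)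
end

section
/- Let F = y₀⁴y₁ + y₁⁴y₂ + y₂⁴y₀ ∈ ℂ[y₀,y₁,y₂]. Then the projective plane curve V(F) is smooth: the only common zero in ℂ³ of ∂F/∂y₀ = 4y₀³y₁ + y₂⁴, ∂F/∂y₁ = y₀⁴ + 4y₁³y₂, ∂F/∂y₂ = y₁⁴ + 4y₂³y₀ is the origin. -/
theorem quintic_39_smooth (y₀ y₁ y₂ : ℂ)
    (h₀ : 4 * y₀ ^ 3 * y₁ + y₂ ^ 4 = 0)
    (h₁ : y₀ ^ 4 + 4 * y₁ ^ 3 * y₂ = 0)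
    (h₂ : y₁ ^ 4 + 4 * y₂ ^ 3 * y₀ = 0) :
    y₀ = 0 ∧ y₁ = 0 ∧ y₂ = 0 := by
  have key : (65 : ℂ) * (y₀ * y₁ * y₂) ^ 4 = 0 := by
    linear_combination (y₁ ^ 4 * y₂ ^ 4) * h₁ - (4 * y₁ ^ 3 * y₂ ^ 5) * h₂ +
      (16 * y₀ * y₁ ^ 3 * y₂ ^ 4) * h₀
  have hprod : y₀ * y₁ * y₂ = 0 := by
    have h65 : (65 : ℂ) ≠ 0 := by norm_num
    have := mul_eq_zero.mp key
    rcases this with h | h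
    · exact absurd h h65
    · exact pow_eq_zero_iff (by norm_num) |>.mp h
  rcases mul_eq_zero.mp hprod with h | hz
  · rcases mul_eq_zero.mp h with hx | hy
    · -- y₀ = 0
      have hz : y₂ = 0 := by
        have : y₂ ^ 4 = 0 := by linear_combination h₀ - 4 * y₀ ^ 2 * y₁ * hx
        exact pow_eq_zero_iff (by norm_num) |>.mp this
      have hy : y₁ = 0 := by
        have : y₁ ^ 4 = 0 := by linear_combination h₂ - 4 * y₂ ^ 2 * y₀ * hz
        exact pow_eq_zero_iff (by norm_num) |>.mp this
      exact ⟨hx, hy, hz⟩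
    · -- y₁ = 0
      have hx : y₀ = 0 := by
        have : y₀ ^ 4 = 0 := by linear_combination h₁ - 4 * y₁ ^ 2 * y₂ * hy
        exact pow_eq_zero_iff (by norm_num) |>.mp this
      have hz : y₂ = 0 := by
        have : y₂ ^ 4 = 0 := by linear_combination h₀ - 4 * y₀ ^ 2 * y₁ * hx
        exact pow_eq_zero_iff (by norm_num) |>.mp this
      exact ⟨hx, hy, hz⟩
  · -- y₂ = 0
    have hy : y₁ = 0 := by
      have : y₁ ^ 4 = 0 := by linear_combination h₂ - 4 * y₂ ^ 2 * y₀ * hz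
      exact pow_eq_zero_iff (by norm_num) |>.mp this
    have hx : y₀ = 0 := by
      have : y₀ ^ 4 = 0 := by linear_combination h₁ - 4 * y₁ ^ 2 * y₂ * hy
      exact pow_eq_zero_iff (by norm_num) |>.mp this
    exact ⟨hx, hy, hz⟩
end

section
/- In ℂ[x₀,x₁,x₂,x₃,x₄], consider the three quadrics Q₁ = Σᵢ xᵢ², Q₂ = Σᵢ ζ₅ⁱ xᵢ², Q₃ = Σᵢ ζ₅⁻ⁱ xᵢ² where ζ₅ = exp(2πi/5) and i ranges over 0,…,4. The permutation-with-signs substitution σ: (x₀,x₁,x₂,x₃,x₄) ↦ (−x₃, x₂, x₁, −x₀, −x₄) preserves the ideal ⟨Q₁, Q₂, Q₃⟩; in fact Q₁ ↦ Q₁, and σ maps each of Q₂, Q₃ into the ℂ-span of Q₁, Q₂, Q₃. -/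
open MvPolynomial

theorem wiman_genus5_invariance :
    let ζ₅ : ℂ := Complex.exp (2 * Real.pi * Complex.I / 5)
    let Q₁ : MvPolynomial (Fin 5) ℂ := ∑ i : Fin 5, X i ^ 2
    let Q₂ : MvPolynomial (Fin 5) ℂ := ∑ i : Fin 5, C (ζ₅ ^ (i : ℕ)) * X i ^ 2
    let Q₃ : MvPolynomial (Fin 5) ℂ := ∑ i : Fin 5, C (ζ₅⁻¹ ^ (i : ℕ)) * X i ^ 2
    let σ : Fin 5 → MvPolynomial (Fin 5) ℂ := ![-X 3, X 2, X 1, -X 0, -X 4]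
    Ideal.map (aeval σ : MvPolynomial (Fin 5) ℂ →ₐ[ℂ] MvPolynomial (Fin 5) ℂ)
        (Ideal.span {Q₁, Q₂, Q₃}) = Ideal.span {Q₁, Q₂, Q₃} ∧
    aeval σ Q₁ = Q₁ ∧
    aeval σ Q₂ ∈ Submodule.span ℂ ({Q₁, Q₂, Q₃} : Set (MvPolynomial (Fin 5) ℂ)) ∧
    aeval σ Q₃ ∈ Submodule.span ℂ ({Q₁, Q₂, Q₃} : Set (MvPolynomial (Fin 5) ℂ)) := by
  intro ζ₅ Q₁ Q₂ Q₃ σ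
  have hζ5 : ζ₅ ^ 5 = 1 := by
    show Complex.exp (2 * Real.pi * Complex.I / 5) ^ 5 = 1
    rw [← Complex.exp_nat_mul, show (5 : ℕ) * (2 * Real.pi * Complex.I / 5)
        = 2 * Real.pi * Complex.I by push_cast; ring]
    exact Complex.exp_two_pi_mul_I
  have hζne : ζ₅ ≠ 0 := Complex.exp_ne_zero _
  have hinv : ζ₅⁻¹ = ζ₅ ^ 4 := by
    refine inv_eq_of_mul_eq_one_right ?_
    rw [← pow_succ']; exact hζ5
  have hw : (C ζ₅ : MvPolynomial (Fin 5) ℂ) ^ 5 = 1 := by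
    rw [← map_pow, hζ5, map_one]
  have hQ1 : aeval σ Q₁ = Q₁ := by
    simp only [Q₁, σ, Fin.sum_univ_five, map_add, map_pow, aeval_X,
      Matrix.cons_val_zero, Matrix.cons_val_one, Matrix.head_cons,
      Matrix.cons_val_two, Matrix.tail_cons, Matrix.cons_val_three,
      Matrix.cons_val_four]
    ring
  have hQ2 : aeval σ Q₂ = C (ζ₅ ^ 3) * Q₃ := by
    simp only [Q₂, Q₃, σ, hinv, Fin.sum_univ_five, map_add, map_mul,
      map_pow, aeval_C, aeval_X, Matrix.cons_val_zero, Matrix.cons_val_one,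
      Matrix.head_cons, Matrix.cons_val_two, Matrix.tail_cons,
      Matrix.cons_val_three, Matrix.cons_val_four, Fin.val_zero, Fin.val_one,
      show ((2 : Fin 5) : ℕ) = 2 from rfl, show ((3 : Fin 5) : ℕ) = 3 from rfl,
      show ((4 : Fin 5) : ℕ) = 4 from rfl, MvPolynomial.algebraMap_eq,
      pow_zero, pow_one, map_one]
    linear_combination (-(C ζ₅)^2 * X 1^2 - ((C ζ₅)^6 + C ζ₅) * X 2^2
      - ((C ζ₅)^10 + (C ζ₅)^5 + 1) * X 3^2
      - ((C ζ₅)^14 + (C ζ₅)^9 + (C ζ₅)^4) * X 4^2) * hw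
  have hQ3 : aeval σ Q₃ = C (ζ₅ ^ 2) * Q₂ := by
    simp only [Q₂, Q₃, σ, hinv, Fin.sum_univ_five, map_add, map_mul,
      map_pow, aeval_C, aeval_X, Matrix.cons_val_zero, Matrix.cons_val_one,
      Matrix.head_cons, Matrix.cons_val_two, Matrix.tail_cons,
      Matrix.cons_val_three, Matrix.cons_val_four, Fin.val_zero, Fin.val_one,
      show ((2 : Fin 5) : ℕ) = 2 from rfl, show ((3 : Fin 5) : ℕ) = 3 from rfl,
      show ((4 : Fin 5) : ℕ) = 4 from rfl, MvPolynomial.algebraMap_eq,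
      pow_zero, pow_one, map_one]
    linear_combination (((C ζ₅)^7 + (C ζ₅)^2) * X 0^2 + (C ζ₅)^3 * X 1^2
      - X 3^2 + ((C ζ₅)^11 + (C ζ₅)^6) * X 4^2) * hw
  refine ⟨?_, hQ1, ?_, ?_⟩
  · rw [Ideal.map_span, Set.image_insert_eq, Set.image_insert_eq,
      Set.image_singleton, hQ1, hQ2, hQ3]
    apply le_antisymm <;> rw [Ideal.span_le] <;>
      intro p hp <;> simp only [Set.mem_insert_iff, Set.mem_singleton_iff] at hp
    · rcases hp with rfl | rfl | rfl
      · exact Ideal.subset_span (Set.mem_insert _ _)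
      · exact Ideal.mul_mem_left _ _
          (Ideal.subset_span (Set.mem_insert_of_mem _ (Set.mem_insert_of_mem _ rfl)))
      · exact Ideal.mul_mem_left _ _
          (Ideal.subset_span (Set.mem_insert_of_mem _ (Set.mem_insert _ _)))
    · rcases hp with rfl | rfl | rfl
      · exact Ideal.subset_span (Set.mem_insert _ _)
      · have : Q₂ = C (ζ₅ ^ 2)⁻¹ * (C (ζ₅ ^ 2) * Q₂) := by
          rw [← mul_assoc, ← C_mul, inv_mul_cancel₀ (pow_ne_zero _ hζne), C_1, one_mul]
        have h := Ideal.mul_mem_left _ (C (ζ₅ ^ 2)⁻¹)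
          (Ideal.subset_span (Set.mem_insert_of_mem Q₁
            (Set.mem_insert_of_mem _ rfl)) :
            C (ζ₅ ^ 2) * Q₂ ∈ Ideal.span {Q₁, C (ζ₅ ^ 3) * Q₃, C (ζ₅ ^ 2) * Q₂})
        rwa [← this] at h
      · have : Q₃ = C (ζ₅ ^ 3)⁻¹ * (C (ζ₅ ^ 3) * Q₃) := by
          rw [← mul_assoc, ← C_mul, inv_mul_cancel₀ (pow_ne_zero _ hζne), C_1, one_mul]
        have h := Ideal.mul_mem_left _ (C (ζ₅ ^ 3)⁻¹)
          (Ideal.subset_span (Set.mem_insert_of_mem Q₁ (Set.mem_insert _ _)) :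
            C (ζ₅ ^ 3) * Q₃ ∈ Ideal.span {Q₁, C (ζ₅ ^ 3) * Q₃, C (ζ₅ ^ 2) * Q₂})
        rwa [← this] at h
  · rw [hQ2, ← MvPolynomial.smul_eq_C_mul]
    exact Submodule.smul_mem _ _
      (Submodule.subset_span (Set.mem_insert_of_mem _ (Set.mem_insert_of_mem _ rfl)))
  · rw [hQ3, ← MvPolynomial.smul_eq_C_mul]
    exact Submodule.smul_mem _ _
      (Submodule.subset_span (Set.mem_insert_of_mem _ (Set.mem_insert _ _)))
end
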